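/- Let ℓ be a prime and c ∈ ℚ_ℓ. If y₀ ∈ ℚ_ℓ satisfies y₀² ≠ c, and δ ∈ ℚ_ℓ satisfies |δ|_ℓ < max{|2y₀|_ℓ, 1} and |δ|_ℓ ≤ ℓ^{−2}·|y₀²−c|_ℓ / max{|2y₀|_ℓ, 1}, then |(y₀+δ)²−c|'_ℓ = |y₀²−c|'_ℓ. In particular, the map y ↦ |y²−c|'_ℓ is locally constant on the open set {y ∈ ℚ_ℓ : y² ≠ c}. -/

import Mathlib

/-!
`|y|'_ℓ` depends only on the valuation of `y` and, for `ℓ = 2`, on the unit part modulo `4`;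
both are unchanged when `y` moves by at most `ℓ⁻² |y|_ℓ`. Since
`(y₀ + δ)² - y₀² = δ (2y₀ + δ)` has norm at most `|δ|_ℓ · max{|2y₀|_ℓ, 1}`, the hypotheses on `δ`
are what make `(y₀ + δ)² - c` that close to `y₀² - c`.
-/

open scoped Classical

/-- The modified `ℓ`-adic norm `|y|'_ℓ` on `ℚ_ℓ`.
For `ℓ ≠ 2` and `y ≠ 0` with valuation `v`, it is `ℓ^(-2⌊v/2⌋)`.
For `ℓ = 2` it is `2^{-v}`, `2^{-v+2}` or `2^{-v+3}` according to whether `v` is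
even and the unit part is `≡ 1 (mod 4)`, `v` even and unit part `≡ 3 (mod 4)`,
or `v` odd.  We set `|0|'_ℓ = 0`. -/
noncomputable def modNorm (p : ℕ) [Fact p.Prime] (y : ℚ_[p]) : ℝ :=
  if y = 0 then 0
  else if p = 2 then
    (if y.valuation % 2 = 0 then
      (if ‖y * (2 : ℚ_[p]) ^ (-y.valuation) - 1‖ ≤ (4 : ℝ)⁻¹ then
          (2 : ℝ) ^ (-y.valuation)
        else (2 : ℝ) ^ (-y.valuation + 2))
      else (2 : ℝ) ^ (-y.valuation + 3))
  else (p : ℝ) ^ (-(2 * (y.valuation / 2)))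

lemma norm_add_sq_sub_sq_le {R : Type*} [NormedCommRing R] [IsUltrametricDist R] {y δ : R}
    {M : ℝ} (hy : ‖2 * y‖ ≤ M) (hδ : ‖δ‖ ≤ M) : ‖(y + δ) ^ 2 - y ^ 2‖ ≤ ‖δ‖ * M := by
  rw [show (y + δ) ^ 2 - y ^ 2 = δ * (2 * y + δ) by ring]
  exact (norm_mul_le _ _).trans <| mul_le_mul_of_nonneg_left
    ((IsUltrametricDist.norm_add_le_max _ _).trans (max_le hy hδ)) (norm_nonneg _)

namespace Padic

variable {p : ℕ} [Fact p.Prime]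

lemma valuation_eq_of_norm_eq {a b : ℚ_[p]} (ha : a ≠ 0) (hb : b ≠ 0) (h : ‖a‖ = ‖b‖) :
    a.valuation = b.valuation := by
  have hp : (1 : ℝ) < p := mod_cast (Fact.out : p.Prime).one_lt
  rwa [norm_eq_zpow_neg_valuation ha, norm_eq_zpow_neg_valuation hb,
    zpow_right_inj₀ (by positivity) hp.ne', neg_inj] at h

lemma norm_two_zpow_neg_valuation {b : ℚ_[2]} (hb : b ≠ 0) :
    ‖(2 : ℚ_[2]) ^ (-b.valuation)‖ = ‖b‖⁻¹ := by
  have h2 : ‖(2 : ℚ_[2])‖ = 2⁻¹ := by simpa using norm_p (p := 2)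
  rw [norm_zpow, h2, norm_eq_zpow_neg_valuation hb]
  simp

lemma norm_mul_two_zpow_sub_one_le_iff {a b : ℚ_[2]} (hb : b ≠ 0) (h : ‖a - b‖ ≤ 4⁻¹ * ‖b‖) :
    ‖a * 2 ^ (-b.valuation) - 1‖ ≤ 4⁻¹ ↔ ‖b * 2 ^ (-b.valuation) - 1‖ ≤ 4⁻¹ := by
  have hclose : b * 2 ^ (-b.valuation) ∈ Metric.closedBall (a * 2 ^ (-b.valuation)) 4⁻¹ := by
    rw [Metric.mem_closedBall, dist_eq_norm, ← sub_mul, norm_mul, norm_two_zpow_neg_valuation hb,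
      norm_sub_rev, mul_inv_le_iff₀ (norm_pos_iff.2 hb)]
    exact h
  have := congrArg (1 ∈ ·) (IsUltrametricDist.closedBall_eq_of_mem hclose)
  simpa [dist_eq_norm, norm_sub_rev] using this

end Padic

open Padic in
theorem modNorm_eq_of_norm_sub_le {p : ℕ} [Fact p.Prime] {a b : ℚ_[p]} (hb : b ≠ 0)
    (h : ‖a - b‖ ≤ ((p : ℝ) ^ 2)⁻¹ * ‖b‖) : modNorm p a = modNorm p b := by
  have hp : (1 : ℝ) < p := mod_cast (Fact.out : p.Prime).one_lt
  have hlt : ‖a - b‖ < ‖b‖ := h.trans_lt <| mul_lt_of_lt_one_left (norm_pos_iff.2 hb)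
    (inv_lt_one_of_one_lt₀ (one_lt_pow₀ hp two_ne_zero))
  have hnorm : ‖a‖ = ‖b‖ := norm_eq_of_norm_sub_lt_right hlt
  have ha : a ≠ 0 := norm_ne_zero_iff.1 (hnorm ▸ norm_ne_zero_iff.2 hb)
  have hv := valuation_eq_of_norm_eq ha hb hnorm
  rcases eq_or_ne p 2 with rfl | hp2
  · have hunit := norm_mul_two_zpow_sub_one_le_iff hb (h.trans_eq (by norm_num))
    simp only [modNorm, if_neg ha, if_neg hb, hv, hunit]
  · simp only [modNorm, if_neg ha, if_neg hb, hv, if_neg hp2]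

/-- Local constancy of `y ↦ |y²-c|'_ℓ`: if `y₀² ≠ c` and `δ` satisfies
`|δ|_ℓ < max{|2y₀|_ℓ, 1}` and `|δ|_ℓ ≤ ℓ^{-2}·|y₀²-c|_ℓ / max{|2y₀|_ℓ, 1}`,
then `|(y₀+δ)²-c|'_ℓ = |y₀²-c|'_ℓ`; in particular the map is locally constant
on `{y : y² ≠ c}`. -/
theorem stmt14 (p : ℕ) [Fact p.Prime] (c : ℚ_[p]) :
    (∀ y₀ δ : ℚ_[p], y₀ ^ 2 ≠ c →
      ‖δ‖ < max ‖2 * y₀‖ 1 →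
      ‖δ‖ ≤ ((p : ℝ) ^ 2)⁻¹ * ‖y₀ ^ 2 - c‖ / max ‖2 * y₀‖ 1 →
      modNorm p ((y₀ + δ) ^ 2 - c) = modNorm p (y₀ ^ 2 - c)) ∧
    (∀ y₀ : ℚ_[p], y₀ ^ 2 ≠ c → ∃ ε > (0 : ℝ), ∀ y : ℚ_[p], ‖y - y₀‖ < ε →
      modNorm p (y ^ 2 - c) = modNorm p (y₀ ^ 2 - c)) := by
  have perturb : ∀ y₀ δ : ℚ_[p], y₀ ^ 2 ≠ c →
      ‖δ‖ < max ‖2 * y₀‖ 1 →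
      ‖δ‖ ≤ ((p : ℝ) ^ 2)⁻¹ * ‖y₀ ^ 2 - c‖ / max ‖2 * y₀‖ 1 →
      modNorm p ((y₀ + δ) ^ 2 - c) = modNorm p (y₀ ^ 2 - c) := by
    intro y₀ δ hne hδ hsmall
    refine modNorm_eq_of_norm_sub_le (sub_ne_zero.2 hne) ?_
    rw [sub_sub_sub_cancel_right]
    calc ‖(y₀ + δ) ^ 2 - y₀ ^ 2‖ ≤ ‖δ‖ * max ‖2 * y₀‖ 1 :=
          norm_add_sq_sub_sq_le (le_max_left _ _) hδ.le
      _ ≤ _ := (le_div_iff₀ (lt_max_of_lt_right one_pos)).1 hsmall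
  refine ⟨perturb, fun y₀ hne => ?_⟩
  have hp : (0 : ℝ) < p := mod_cast (Fact.out : p.Prime).pos
  have hM : 0 < max ‖2 * y₀‖ 1 := lt_max_of_lt_right one_pos
  have hc : 0 < ‖y₀ ^ 2 - c‖ := norm_pos_iff.2 (sub_ne_zero.2 hne)
  refine ⟨min (max ‖2 * y₀‖ 1) (((p : ℝ) ^ 2)⁻¹ * ‖y₀ ^ 2 - c‖ / max ‖2 * y₀‖ 1),
    lt_min hM (by positivity), fun y hy => ?_⟩
  simpa using perturb y₀ (y - y₀) hne (hy.trans_le (min_le_left _ _))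
    (hy.trans_le (min_le_right _ _)).le
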